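/- arXiv:2001.09637 — 4 statements merged into one kernel-verified Lean document; each statement's English description precedes it below -/
import Mathlib

section
/- Let G=(V,E) be a connected simple graph with n vertices and m edges, and let g be an additive module function of G (g(X ∪ Y) = g(X) + g(Y) for disjoint X,Y) satisfying the boundary condition g(T_α) = d_α for each leaf α, where d_α is the degree of the vertex with codeword α. Then for any encoding tree T of G, the structural entropy of G with module function g given by T equals the Shannon entropy of the degree distribution: H^T_g(G) = -Σ_{i=1}^n (d_i/2m) log₂(d_i/2m). In particular, H^T_g is independent of the choice of encoding tree T. -/
open Finset

open scoped Classical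

/-- An encoding tree over a finite vertex set `V`: a rooted tree whose nodes carry
nonempty subsets (markers) of `V`, the root carries `V`, the markers of the children
of any non-leaf node partition the node's marker, every non-leaf node has at least
two children, and leaves carry singletons. -/
structure EncTree (V : Type) [Fintype V] [DecidableEq V] : Type 1 where
  node : Type
  [fin : Fintype node]
  [deq : DecidableEq node]
  root : node
  parent : node → node
  parent_root : parent root = root
  depth : node → ℕ
  depth_root : depth root = 0
  depth_parent : ∀ a, a ≠ root → depth a = depth (parent a) + 1
  mark : node → Finset V
  mark_root : mark root = Finset.univ
  mark_nonempty : ∀ a, (mark a).Nonempty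
  mark_subset : ∀ a, a ≠ root → mark a ⊆ mark (parent a)
  children_partition : ∀ a, (∃ b, b ≠ a ∧ parent b = a) →
    ∀ x ∈ mark a, ∃! b, b ≠ a ∧ parent b = a ∧ x ∈ mark b
  children_two : ∀ a b, b ≠ a → parent b = a → ∃ c, c ≠ a ∧ c ≠ b ∧ parent c = a
  leaf_singleton : ∀ a, (∀ b, b ≠ a → parent b ≠ a) → (mark a).card = 1

attribute [instance] EncTree.fin EncTree.deq

namespace SiLeM

variable {V : Type} [Fintype V] [DecidableEq V]

/-- A node of an encoding tree is a leaf if it has no children. -/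
def IsLeaf (T : EncTree V) (a : T.node) : Prop :=
  ∀ b, b ≠ a → T.parent b ≠ a

/-- Volume of a set of vertices: total degree. -/
noncomputable def vol (G : SimpleGraph V) (A : Finset V) : ℝ :=
  ∑ v ∈ A, (G.degree v : ℝ)

/-- Volume of the graph: total degree of all vertices. -/
noncomputable def volG (G : SimpleGraph V) : ℝ := ∑ v : V, (G.degree v : ℝ)

/-- `g_A`: the number of edges with exactly one endpoint in `A`
(counted as ordered pairs entering `A`). -/
noncomputable def ecut (G : SimpleGraph V) (A : Finset V) : ℝ :=
  ((Finset.univ.filter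
      (fun p : V × V => G.Adj p.1 p.2 ∧ p.1 ∉ A ∧ p.2 ∈ A)).card : ℝ)

/-- Structural entropy of `G` given by the encoding tree `T`. -/
noncomputable def HT (G : SimpleGraph V) (T : EncTree V) : ℝ :=
  -∑ a ∈ Finset.univ.filter (fun a : T.node => a ≠ T.root),
      (ecut G (T.mark a) / volG G) *
        Real.logb 2 (vol G (T.mark a) / vol G (T.mark (T.parent a)))

/-- One-dimensional structural entropy: Shannon entropy of the degree distribution. -/
noncomputable def H1 (G : SimpleGraph V) : ℝ :=
  -∑ v : V, ((G.degree v : ℝ) / volG G) * Real.logb 2 ((G.degree v : ℝ) / volG G)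

/-- Compressing information of `G` given by the encoding tree `T`. -/
noncomputable def CT (G : SimpleGraph V) (T : EncTree V) : ℝ :=
  -∑ a ∈ Finset.univ.filter (fun a : T.node => a ≠ T.root),
      ((vol G (T.mark a) - ecut G (T.mark a)) / volG G) *
        Real.logb 2 (vol G (T.mark a) / vol G (T.mark (T.parent a)))

/-- Structural entropy of `G`: minimum over all encoding trees. -/
noncomputable def SE (G : SimpleGraph V) : ℝ :=
  sInf {x | ∃ T : EncTree V, x = HT G T}

/-- `k`-dimensional structural entropy: minimum over encoding trees of height ≤ k. -/
noncomputable def SEk (G : SimpleGraph V) (k : ℕ) : ℝ :=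
  sInf {x | ∃ T : EncTree V, (∀ a, T.depth a ≤ k) ∧ x = HT G T}

/-- Compressing information of `G`: maximum over all encoding trees. -/
noncomputable def CInfo (G : SimpleGraph V) : ℝ :=
  sSup {x | ∃ T : EncTree V, x = CT G T}

/-- `k`-dimensional compressing information. -/
noncomputable def Ck (G : SimpleGraph V) (k : ℕ) : ℝ :=
  sSup {x | ∃ T : EncTree V, (∀ a, T.depth a ≤ k) ∧ x = CT G T}

/-- Decoding information of `G`. -/
noncomputable def DInfo (G : SimpleGraph V) : ℝ :=
  sSup {x | ∃ T : EncTree V, x = H1 G - HT G T}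

/-- `k`-dimensional decoding information. -/
noncomputable def Dk (G : SimpleGraph V) (k : ℕ) : ℝ :=
  sSup {x | ∃ T : EncTree V, (∀ a, T.depth a ≤ k) ∧ x = H1 G - HT G T}

/-- Conductance of a subset `S`. -/
noncomputable def condS (G : SimpleGraph V) (S : Finset V) : ℝ :=
  ecut G S / min (vol G S) (vol G Sᶜ)

/-- Conductance of the graph. -/
noncomputable def conductance (G : SimpleGraph V) : ℝ :=
  sInf {x | ∃ S : Finset V, S.Nonempty ∧ S ≠ Finset.univ ∧ x = condS G S}

/-- `H̃(Y = β | X = α)` for an edge `(x, y)` with codewords `α, β`: the sum is over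
the nodes `δ` with `γ ⊂ δ ⊆ β` where `γ` is the longest common initial segment of
`α` and `β`; these are exactly the nodes whose marker contains `y` but not `x`. -/
noncomputable def Htilde (G : SimpleGraph V) (T : EncTree V) (x y : V) : ℝ :=
  -∑ a ∈ Finset.univ.filter (fun a : T.node => y ∈ T.mark a ∧ x ∉ T.mark a),
      Real.logb 2 (vol G (T.mark a) / vol G (T.mark (T.parent a)))

/-- `Ĩ(X = α; Y = β)` for an edge `(x, y)`: the sum over the nodes `δ` with
`λ ⊂ δ ⊆ γ`, i.e. the non-root nodes whose marker contains both `x` and `y`. -/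
noncomputable def Itilde (G : SimpleGraph V) (T : EncTree V) (x y : V) : ℝ :=
  -∑ a ∈ Finset.univ.filter
      (fun a : T.node => a ≠ T.root ∧ x ∈ T.mark a ∧ y ∈ T.mark a),
      Real.logb 2 (vol G (T.mark a) / vol G (T.mark (T.parent a)))

end SiLeM

/-- Structural entropy of `G` with module function `g` given by encoding tree `T`. -/
noncomputable def SiLeM.HTg {V : Type} [Fintype V] [DecidableEq V]
    (G : SimpleGraph V) (g : Finset V → ℝ) (T : EncTree V) : ℝ :=
  -∑ a ∈ Finset.univ.filter (fun a : T.node => a ≠ T.root),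
      (g (T.mark a) / SiLeM.volG G) *
        Real.logb 2 (SiLeM.vol G (T.mark a) / SiLeM.vol G (T.mark (T.parent a)))

/-! Additivity and the leaf condition force `g = vol` on every set of vertices, because every
vertex is the marker of a leaf. Writing `vol α = ∑_{v ∈ T_α} d_v` and exchanging the sums, the
entropy becomes `-∑_v (d_v / 2m) ∑_α log₂ (vol α / vol α⁻)`, the inner sum running over the
non-root nodes containing `v`. These form the path from the leaf of `v` up to the root, so the
inner sum telescopes to `log₂ (d_v / 2m)`. -/

open SiLeM Real

theorem Finset.additive_apply_eq_sum_singleton {α β : Type*} [DecidableEq α]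
    [AddCancelCommMonoid β] {g : Finset α → β}
    (hadd : ∀ X Y : Finset α, Disjoint X Y → g (X ∪ Y) = g X + g Y) (s : Finset α) :
    g s = ∑ x ∈ s, g {x} := by
  have hempty : g ∅ = 0 := by simpa using hadd ∅ ∅ (disjoint_empty_left _)
  induction s using Finset.induction_on with
  | empty => rw [hempty, sum_empty]
  | insert x s hx ih =>
    rw [sum_insert hx, ← ih, ← hadd _ _ (disjoint_singleton_left.mpr hx), insert_eq]

namespace EncTree

variable {V : Type} [Fintype V] [DecidableEq V] (T : EncTree V)

theorem parent_ne_self {a : T.node} (ha : a ≠ T.root) : T.parent a ≠ a := by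
  intro h
  have := T.depth_parent a ha
  rw [h] at this
  omega

theorem not_isLeaf_parent {a : T.node} (ha : a ≠ T.root) : ¬IsLeaf T (T.parent a) :=
  fun h => h a (T.parent_ne_self ha).symm rfl

theorem eq_of_parent_eq_of_mem {a b : T.node} {v : V} (ha : a ≠ T.root) (hb : b ≠ T.root)
    (hab : T.parent a = T.parent b) (hva : v ∈ T.mark a) (hvb : v ∈ T.mark b) : a = b := by
  obtain ⟨c, -, hc⟩ := T.children_partition (T.parent a)
    ⟨a, (T.parent_ne_self ha).symm, rfl⟩ v (T.mark_subset a ha hva)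
  exact (hc a ⟨(T.parent_ne_self ha).symm, rfl, hva⟩).trans
    (hc b ⟨hab ▸ (T.parent_ne_self hb).symm, hab.symm, hvb⟩).symm

theorem exists_child_mem {a : T.node} {v : V} (ha : ¬IsLeaf T a) (hv : v ∈ T.mark a) :
    ∃ b, b ≠ T.root ∧ T.parent b = a ∧ v ∈ T.mark b := by
  simp only [IsLeaf, not_forall, not_not] at ha
  obtain ⟨b, ⟨hba, hpb, hvb⟩, -⟩ := T.children_partition a (by simpa using ha) v hv
  refine ⟨b, ?_, hpb, hvb⟩
  rintro rfl
  exact hba (T.parent_root ▸ hpb)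

theorem mark_eq_singleton_of_isLeaf {a : T.node} {v : V} (ha : IsLeaf T a)
    (hv : v ∈ T.mark a) : T.mark a = {v} := by
  obtain ⟨w, hw⟩ := card_eq_one.mp (T.leaf_singleton a ha)
  rw [hw, mem_singleton] at hv
  rw [hw, hv]

/-- Telescoping along the nodes containing `v`: `parent` maps the non-root ones bijectively
onto the non-leaf ones. -/
theorem sum_sub_parent_eq {M : Type*} [AddCommGroup M] (L : T.node → M) (v : V) :
    ∑ a ∈ univ.filter (fun a => a ≠ T.root ∧ v ∈ T.mark a), (L a - L (T.parent a)) =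
      ∑ a ∈ univ.filter (fun a => IsLeaf T a ∧ v ∈ T.mark a), L a - L T.root := by
  have hparent : ∑ a ∈ univ.filter (fun a => a ≠ T.root ∧ v ∈ T.mark a), L (T.parent a) =
      ∑ a ∈ univ.filter (fun a => ¬IsLeaf T a ∧ v ∈ T.mark a), L a := by
    refine sum_nbij T.parent ?_ ?_ ?_ (fun _ _ => rfl)
    · simp only [mem_filter, mem_univ, true_and]
      exact fun a ha => ⟨T.not_isLeaf_parent ha.1, T.mark_subset a ha.1 ha.2⟩
    · simp only [Set.InjOn, coe_filter, mem_univ, true_and, Set.mem_ofPred_eq]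
      exact fun a ha b hb hab => T.eq_of_parent_eq_of_mem ha.1 hb.1 hab ha.2 hb.2
    · simp only [Set.SurjOn, coe_filter, mem_univ, true_and]
      intro c hc
      obtain ⟨b, hb, hpb, hvb⟩ := T.exists_child_mem hc.1 hc.2
      exact ⟨b, ⟨hb, hvb⟩, hpb⟩
  have hroot : ∑ a ∈ univ.filter (fun a => v ∈ T.mark a), L a =
      L T.root + ∑ a ∈ univ.filter (fun a => a ≠ T.root ∧ v ∈ T.mark a), L a := by
    rw [← add_sum_erase _ _ (mem_filter.mpr ⟨mem_univ _, T.mark_root ▸ mem_univ v⟩)]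
    congr 2
    ext a
    simp
  have hleaf : ∑ a ∈ univ.filter (fun a => v ∈ T.mark a), L a =
      ∑ a ∈ univ.filter (fun a => IsLeaf T a ∧ v ∈ T.mark a), L a +
        ∑ a ∈ univ.filter (fun a => ¬IsLeaf T a ∧ v ∈ T.mark a), L a := by
    rw [← sum_filter_add_sum_filter_not _ (IsLeaf T)]
    simp only [filter_filter, and_comm]
  rw [sum_sub_distrib, hparent, sub_eq_sub_iff_add_eq_add, add_comm, ← hroot, hleaf]

-- The telescoping identity for a constant function counts the leaves containing `v`.
theorem card_filter_isLeaf_mem (v : V) :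
    #(univ.filter fun a => IsLeaf T a ∧ v ∈ T.mark a) = 1 := by
  have := T.sum_sub_parent_eq (fun _ => (1 : ℤ)) v
  simp only [sub_self, sum_const_zero, sum_const, nsmul_eq_mul, mul_one] at this
  omega

theorem exists_isLeaf_mem (v : V) : ∃ a, IsLeaf T a ∧ v ∈ T.mark a := by
  obtain ⟨a, ha⟩ := card_pos.mp (T.card_filter_isLeaf_mem v ▸ Nat.one_pos)
  exact ⟨a, (mem_filter.mp ha).2⟩

theorem sum_sub_parent_mark_eq {M : Type*} [AddCommGroup M] (F : Finset V → M) (v : V) :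
    ∑ a ∈ univ.filter (fun a => a ≠ T.root ∧ v ∈ T.mark a),
        (F (T.mark a) - F (T.mark (T.parent a))) = F {v} - F univ := by
  refine (T.sum_sub_parent_eq (fun a => F (T.mark a)) v).trans ?_
  rw [T.mark_root, sum_congr rfl fun a ha => by
      rw [T.mark_eq_singleton_of_isLeaf (mem_filter.mp ha).2.1 (mem_filter.mp ha).2.2],
    sum_const, T.card_filter_isLeaf_mem, one_smul]

end EncTree

namespace SiLeM

variable {V : Type} [Fintype V] (G : SimpleGraph V)

theorem vol_singleton (v : V) : vol G {v} = G.degree v := sum_singleton _ _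

theorem vol_univ : vol G univ = volG G := rfl

theorem degree_le_vol {A : Finset V} {v : V} (hv : v ∈ A) : (G.degree v : ℝ) ≤ vol G A :=
  single_le_sum (f := fun v => (G.degree v : ℝ)) (fun _ _ => Nat.cast_nonneg _) hv

theorem eq_vol_of_additive_of_isLeaf [DecidableEq V] (T : EncTree V) {g : Finset V → ℝ}
    (hadd : ∀ X Y : Finset V, Disjoint X Y → g (X ∪ Y) = g X + g Y)
    (hleaf : ∀ a : T.node, IsLeaf T a → g (T.mark a) = vol G (T.mark a)) (A : Finset V) :
    g A = vol G A := by
  rw [additive_apply_eq_sum_singleton hadd, vol]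
  refine sum_congr rfl fun v _ => ?_
  obtain ⟨a, ha, hv⟩ := T.exists_isLeaf_mem v
  rw [← vol_singleton, ← T.mark_eq_singleton_of_isLeaf ha hv, hleaf a ha]

theorem sum_vol_mark_mul [DecidableEq V] {T : EncTree V} (p : T.node → Prop) [DecidablePred p]
    (f : T.node → ℝ) :
    ∑ a ∈ univ.filter p, vol G (T.mark a) * f a =
      ∑ v, (G.degree v : ℝ) * ∑ a ∈ univ.filter (fun a => p a ∧ v ∈ T.mark a), f a := by
  simp only [vol, sum_mul, mul_sum]
  exact sum_comm' (by simp [and_comm])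

theorem sum_logb_vol_div_parent [DecidableEq V] (T : EncTree V) {v : V} (hv : G.degree v ≠ 0) :
    ∑ a ∈ univ.filter (fun a => a ≠ T.root ∧ v ∈ T.mark a),
        logb 2 (vol G (T.mark a) / vol G (T.mark (T.parent a))) =
      logb 2 (G.degree v / volG G) := by
  have hpos {A : Finset V} (hA : v ∈ A) : vol G A ≠ 0 :=
    ((Nat.cast_pos.mpr (Nat.pos_of_ne_zero hv)).trans_le (degree_le_vol G hA)).ne'
  calc _ = ∑ a ∈ univ.filter (fun a => a ≠ T.root ∧ v ∈ T.mark a),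
          (logb 2 (vol G (T.mark a)) - logb 2 (vol G (T.mark (T.parent a)))) :=
        sum_congr rfl fun a ha => by
          obtain ⟨-, hroot, hva⟩ := mem_filter.mp ha
          exact logb_div (hpos hva) (hpos (T.mark_subset a hroot hva))
    _ = logb 2 (vol G {v}) - logb 2 (vol G univ) :=
        T.sum_sub_parent_mark_eq (fun A => logb 2 (vol G A)) v
    _ = logb 2 (G.degree v / volG G) := by
        rw [vol_singleton, vol_univ,
          logb_div (by exact_mod_cast hv) (vol_univ G ▸ hpos (mem_univ v))]

end SiLeM

theorem stmt3_general {V : Type} [Fintype V] [DecidableEq V]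
    (G : SimpleGraph V)
    (g : Finset V → ℝ)
    (hadd : ∀ X Y : Finset V, Disjoint X Y → g (X ∪ Y) = g X + g Y)
    (T : EncTree V)
    (hleaf : ∀ a : T.node, SiLeM.IsLeaf T a → g (T.mark a) = SiLeM.vol G (T.mark a)) :
    SiLeM.HTg G g T =
      -∑ v : V, ((G.degree v : ℝ) / SiLeM.volG G) *
          Real.logb 2 ((G.degree v : ℝ) / SiLeM.volG G) := by
  have hvertex (v : V) : (G.degree v : ℝ) *
      ∑ a ∈ univ.filter (fun a => a ≠ T.root ∧ v ∈ T.mark a),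
        logb 2 (vol G (T.mark a) / vol G (T.mark (T.parent a))) =
      G.degree v * logb 2 (G.degree v / volG G) := by
    rcases eq_or_ne (G.degree v) 0 with h | h
    · simp [h]
    · rw [sum_logb_vol_div_parent G T h]
  simp only [HTg, eq_vol_of_additive_of_isLeaf G T hadd hleaf, div_mul_eq_mul_div, ← sum_div,
    sum_vol_mark_mul, hvertex]

/-- For an additive module function `g` with the boundary condition
`g(T_α) = d_α` at leaves, the structural entropy with module function `g` equals
the Shannon entropy of the degree distribution, for every encoding tree `T`.
(Here `2m = vol(G)`.) -/
theorem stmt3 {V : Type} [Fintype V] [DecidableEq V]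
    (G : SimpleGraph V) (hconn : G.Connected)
    (g : Finset V → ℝ) (hg0 : ∀ X : Finset V, 0 ≤ g X)
    (hadd : ∀ X Y : Finset V, Disjoint X Y → g (X ∪ Y) = g X + g Y)
    (T : EncTree V)
    (hleaf : ∀ a : T.node, SiLeM.IsLeaf T a → g (T.mark a) = SiLeM.vol G (T.mark a)) :
    SiLeM.HTg G g T =
      -∑ v : V, ((G.degree v : ℝ) / SiLeM.volG G) *
          Real.logb 2 ((G.degree v : ℝ) / SiLeM.volG G) :=
  stmt3_general G g hadd T hleaf
end

section
/- Let G=(V,E) be an undirected connected graph and T an encoding tree of G. Then the compressing information of G given by T equals the Shannon entropy of the degree distribution minus the structural entropy given by T: C^T(G) = H¹(G) − H^T(G). -/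
open Finset

open scoped Classical

section Aux

open SiLeM

variable {V : Type} [Fintype V] [DecidableEq V]

/-- If every node's parent chain stays at the root, i.e. in the one-vertex case,
every node of the encoding tree is the root. -/
lemma aux_all_root (T : EncTree V) (w : V)
    (huniv : (Finset.univ : Finset V) = {w}) : ∀ a : T.node, a = T.root := by
  have hmem : ∀ a : T.node, w ∈ T.mark a := by
    intro a
    obtain ⟨x, hx⟩ := T.mark_nonempty a
    have hxw : x = w := by
      have : x ∈ ({w} : Finset V) := huniv ▸ Finset.mem_univ x
      simpa using this
    rwa [hxw] at hx
  have key : ∀ n, ∀ a : T.node, T.depth a ≤ n → a = T.root := by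
    intro n
    induction n with
    | zero =>
      intro a ha
      by_contra h
      have := T.depth_parent a h
      omega
    | succ n ih =>
      intro a ha
      by_contra h
      have hd := T.depth_parent a h
      have hpa : T.parent a = T.root := ih _ (by omega)
      obtain ⟨c, hc1, hc2, hc3⟩ := T.children_two T.root a h hpa
      obtain ⟨b, _, hub⟩ := T.children_partition T.root ⟨a, h, hpa⟩ w (hmem _)
      have h1 := hub a ⟨h, hpa, hmem a⟩
      have h2 := hub c ⟨hc1, hc3, hmem c⟩
      exact hc2 (h2.trans h1.symm)
  intro a
  exact key (T.depth a) a le_rfl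

/-- The telescoping identity for a single vertex. -/
lemma aux_telescope (G : SimpleGraph V) (T : EncTree V)
    (hdeg : ∀ w : V, 0 < G.degree w) (v : V) :
    ∑ a ∈ Finset.univ.filter (fun a : T.node => a ≠ T.root ∧ v ∈ T.mark a),
      Real.logb 2 (vol G (T.mark a) / vol G (T.mark (T.parent a)))
    = Real.logb 2 ((G.degree v : ℝ) / volG G) := by
  classical
  have hvol : ∀ a : T.node, 0 < vol G (T.mark a) := by
    intro a
    refine Finset.sum_pos (fun w _ => by exact_mod_cast hdeg w) (T.mark_nonempty a)
  have hvolG : 0 < volG G := by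
    refine Finset.sum_pos (fun w _ => by exact_mod_cast hdeg w) ⟨v, Finset.mem_univ v⟩
  set L : T.node → ℝ := fun a => Real.logb 2 (vol G (T.mark a)) with hL
  set A : Finset T.node := Finset.univ.filter (fun a => v ∈ T.mark a) with hA
  set S : Finset T.node := Finset.univ.filter
      (fun a : T.node => a ≠ T.root ∧ v ∈ T.mark a) with hS
  have hrootA : T.root ∈ A := by
    simp [hA, T.mark_root]
  have hSA : S = A.erase T.root := by
    ext a
    simp [hS, hA, Finset.mem_erase, and_comm]
  have hne_parent : ∀ a : T.node, a ≠ T.root → a ≠ T.parent a := by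
    intro a ha h
    have := T.depth_parent a ha
    rw [← h] at this
    omega
  have hmaps : ∀ a ∈ S, T.parent a ∈ A := by
    intro a ha
    rw [hS, Finset.mem_filter] at ha
    rw [hA, Finset.mem_filter]
    exact ⟨Finset.mem_univ _, T.mark_subset a ha.2.1 ha.2.2⟩
  have hinj : ∀ b ∈ S, ∀ c ∈ S, T.parent b = T.parent c → b = c := by
    intro b hb c hc hbc
    rw [hS, Finset.mem_filter] at hb hc
    obtain ⟨-, hbr, hbv⟩ := hb
    obtain ⟨-, hcr, hcv⟩ := hc
    obtain ⟨u, -, hu⟩ := T.children_partition (T.parent b)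
      ⟨b, hne_parent b hbr, rfl⟩
      v (T.mark_subset b hbr hbv)
    have h1 := hu b ⟨hne_parent b hbr, rfl, hbv⟩
    have h2 := hu c ⟨by rw [hbc]; exact hne_parent c hcr, hbc.symm, hcv⟩
    exact h1.trans h2.symm
  set I : Finset T.node := S.image T.parent with hI
  have hIA : I ⊆ A := by
    intro b hb
    rw [hI, Finset.mem_image] at hb
    obtain ⟨a, ha, rfl⟩ := hb
    exact hmaps a ha
  have hcardI : I.card = S.card := Finset.card_image_of_injOn hinj
  have hcardS : S.card = A.card - 1 := by
    rw [hSA, Finset.card_erase_of_mem hrootA]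
  have hAcard : 1 ≤ A.card := Finset.card_pos.mpr ⟨T.root, hrootA⟩
  have hsd : (A \ I).card = 1 := by
    rw [Finset.card_sdiff_of_subset hIA, hcardI, hcardS]
    omega
  obtain ⟨l, hl⟩ := Finset.card_eq_one.mp hsd
  have hlA : l ∈ A := by
    have : l ∈ A \ I := hl ▸ Finset.mem_singleton_self l
    exact (Finset.mem_sdiff.mp this).1
  have hlI : l ∉ I := by
    have : l ∈ A \ I := hl ▸ Finset.mem_singleton_self l
    exact (Finset.mem_sdiff.mp this).2
  have hIerase : I = A.erase l := by
    have h1 : A \ (A \ I) = I := Finset.sdiff_sdiff_eq_self hIA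
    rw [hl] at h1
    rw [← h1, Finset.erase_eq]
  have hlv : v ∈ T.mark l := by
    rw [hA, Finset.mem_filter] at hlA
    exact hlA.2
  -- l is a leaf
  have hleaf : ∀ b, b ≠ l → T.parent b ≠ l := by
    intro b hb hpb
    obtain ⟨c, ⟨hc1, hc2, hc3⟩, -⟩ := T.children_partition l ⟨b, hb, hpb⟩ v hlv
    have hcr : c ≠ T.root := by
      intro h
      rw [h, T.parent_root] at hc2
      exact hc1 (h.trans hc2)
    have hcS : c ∈ S := by
      rw [hS, Finset.mem_filter]
      exact ⟨Finset.mem_univ _, hcr, hc3⟩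
    exact hlI (Finset.mem_image.mpr ⟨c, hcS, hc2⟩)
  have hmarkl : T.mark l = {v} := by
    have hcard := T.leaf_singleton l hleaf
    obtain ⟨x, hx⟩ := Finset.card_eq_one.mp hcard
    rw [hx] at hlv ⊢
    simp only [Finset.mem_singleton] at hlv
    rw [hlv]
  -- now compute
  have hlogsplit : ∀ a ∈ S,
      Real.logb 2 (vol G (T.mark a) / vol G (T.mark (T.parent a)))
        = L a - L (T.parent a) := by
    intro a _
    rw [hL]
    exact Real.logb_div (ne_of_gt (hvol a)) (ne_of_gt (hvol _))
  rw [Finset.sum_congr rfl hlogsplit, Finset.sum_sub_distrib]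
  have h2 : ∑ a ∈ S, L (T.parent a) = ∑ b ∈ I, L b :=
    (Finset.sum_image hinj).symm
  have h3 : ∑ a ∈ S, L a = (∑ a ∈ A, L a) - L T.root := by
    rw [hSA, Finset.sum_erase_eq_sub hrootA]
  have h4 : ∑ b ∈ I, L b = (∑ a ∈ A, L a) - L l := by
    rw [hIerase, Finset.sum_erase_eq_sub hlA]
  rw [h2, h3, h4]
  have hLl : L l = Real.logb 2 ((G.degree v : ℝ)) := by
    rw [hL]
    simp [hmarkl, vol]
  have hLr : L T.root = Real.logb 2 (volG G) := by
    simp only [hL, T.mark_root]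
    rfl
  rw [hLl, hLr,
    Real.logb_div (by exact_mod_cast (hdeg v).ne') (ne_of_gt hvolG)]
  ring

end Aux

/-- For a connected graph `G` and encoding tree `T`,
`C^T(G) = H¹(G) − H^T(G)`. -/
theorem stmt5 {V : Type} [Fintype V] [DecidableEq V]
    (G : SimpleGraph V) (hconn : G.Connected) (T : EncTree V) :
    SiLeM.CT G T = SiLeM.H1 G - SiLeM.HT G T := by
  classical
  open SiLeM in
  by_cases hdeg : ∀ w : V, 0 < G.degree w
  · -- main case
    have key : CT G T + HT G T = H1 G := by
      have hcomb : CT G T + HT G T =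
          -∑ a ∈ Finset.univ.filter (fun a : T.node => a ≠ T.root),
            (vol G (T.mark a) / volG G) *
              Real.logb 2 (vol G (T.mark a) / vol G (T.mark (T.parent a))) := by
        rw [SiLeM.CT, SiLeM.HT, ← neg_add, ← Finset.sum_add_distrib]
        congr 1
        refine Finset.sum_congr rfl fun a _ => ?_
        ring
      rw [hcomb]
      have hexp : ∀ a ∈ Finset.univ.filter (fun a : T.node => a ≠ T.root),
          (vol G (T.mark a) / volG G) *
            Real.logb 2 (vol G (T.mark a) / vol G (T.mark (T.parent a)))
          = ∑ v : V, (if v ∈ T.mark a then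
              ((G.degree v : ℝ) / volG G) *
                Real.logb 2 (vol G (T.mark a) / vol G (T.mark (T.parent a)))
              else 0) := by
        intro a _
        rw [Finset.sum_ite_mem, Finset.univ_inter]
        rw [SiLeM.vol, Finset.sum_div, Finset.sum_mul]
      rw [Finset.sum_congr rfl hexp, Finset.sum_comm]
      have hswap : ∀ v : V,
          ∑ a ∈ Finset.univ.filter (fun a : T.node => a ≠ T.root),
            (if v ∈ T.mark a then
              ((G.degree v : ℝ) / volG G) *
                Real.logb 2 (vol G (T.mark a) / vol G (T.mark (T.parent a)))
              else 0)
          = ((G.degree v : ℝ) / volG G) *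
              Real.logb 2 ((G.degree v : ℝ) / volG G) := by
        intro v
        rw [← Finset.sum_filter, Finset.filter_filter, ← Finset.mul_sum]
        rw [aux_telescope G T hdeg v]
      rw [Finset.sum_congr rfl (fun v _ => hswap v), SiLeM.H1]
    linarith
  · -- degenerate: some vertex has degree 0; connectivity forces |V| = 1
    push_neg at hdeg
    obtain ⟨w, hw⟩ := hdeg
    have hw0 : G.degree w = 0 := Nat.le_zero.mp hw
    have huniv : (Finset.univ : Finset V) = {w} := by
      ext x
      simp only [Finset.mem_univ, Finset.mem_singleton, true_iff]
      by_contra hx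
      obtain ⟨p⟩ := hconn.preconnected w x
      cases p with
      | nil => exact hx rfl
      | cons h q =>
        have : 0 < G.degree w := G.degree_pos_iff_exists_adj w |>.mpr ⟨_, h⟩
        omega
    have hroot := aux_all_root T w huniv
    have hfilt : Finset.univ.filter (fun a : T.node => a ≠ T.root) = ∅ := by
      refine Finset.filter_eq_empty_iff.mpr fun a _ => ?_
      simp [hroot a]
    have hCT : CT G T = 0 := by
      rw [SiLeM.CT, hfilt, Finset.sum_empty, neg_zero]
    have hHT : HT G T = 0 := by
      rw [SiLeM.HT, hfilt, Finset.sum_empty, neg_zero]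
    have hH1 : H1 G = 0 := by
      rw [SiLeM.H1, huniv, Finset.sum_singleton, hw0]
      simp
    rw [hCT, hHT, hH1]
    ring
end

section
/- Let G=(V,E) be a connected simple graph and T an encoding tree of G. Then the compressing information C^T(G) equals the average edge-based mutual information: C^T(G) = (1/vol(G)) · Σ_{edges (x,y)} Ĩ(X=α; Y=β), where for an edge (x,y) with codewords α,β and γ the longest common initial segment of α and β, Ĩ(X=α;Y=β) = -Σ_{δ: λ ⊂ δ ⊆ γ} log₂(vol(δ)/vol(δ⁻)). -/
open Finset

open scoped Classical

section Aux

variable {V : Type} [Fintype V] [DecidableEq V]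

lemma count_pairs (G : SimpleGraph V) (A : Finset V) :
    ((Finset.univ.filter fun p : V × V => G.Adj p.1 p.2 ∧ p.2 ∈ A).card : ℝ)
      = SiLeM.vol G A := by
  classical
  rw [SiLeM.vol, Finset.card_filter]
  push_cast
  rw [Fintype.sum_prod_type, Finset.sum_comm]
  have h : ∀ v : V, (∑ u : V, if G.Adj u v ∧ v ∈ A then (1:ℝ) else 0)
      = if v ∈ A then (G.degree v : ℝ) else 0 := by
    intro v
    by_cases hv : v ∈ A
    · simp only [hv, and_true, if_true]
      rw [← Finset.sum_filter, Finset.sum_const, nsmul_eq_mul, mul_one]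
      congr 1
      rw [← SimpleGraph.card_neighborFinset_eq_degree, SimpleGraph.neighborFinset_eq_filter]
      congr 1
      ext u
      simp [G.adj_comm]
    · simp [hv]
  simp only [h]
  rw [← Finset.sum_filter]
  exact Finset.sum_congr (by simp) fun _ _ => rfl

lemma vol_sub_ecut (G : SimpleGraph V) (A : Finset V) :
    SiLeM.vol G A - SiLeM.ecut G A
      = ((Finset.univ.filter
          fun p : V × V => G.Adj p.1 p.2 ∧ p.1 ∈ A ∧ p.2 ∈ A).card : ℝ) := by
  classical
  rw [← count_pairs G A, SiLeM.ecut]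
  rw [sub_eq_iff_eq_add]
  push_cast
  rw [← Nat.cast_add]
  congr 1
  have := Finset.card_filter_add_card_filter_not
    (s := Finset.univ.filter fun p : V × V => G.Adj p.1 p.2 ∧ p.2 ∈ A)
    (p := fun p : V × V => p.1 ∈ A)
  rw [Finset.filter_filter, Finset.filter_filter] at this
  rw [← this]
  congr 1
  · congr 1; apply Finset.filter_congr; intro p _; tauto
  · congr 1; apply Finset.filter_congr; intro p _; tauto

end Aux

/-- For a connected simple graph `G` and encoding tree `T`,
`C^T(G)` equals the average over all (directed) edges of the mutual information
`Ĩ(X = α; Y = β)`. -/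
theorem stmt6 {V : Type} [Fintype V] [DecidableEq V]
    (G : SimpleGraph V) (hconn : G.Connected) (T : EncTree V) :
    SiLeM.CT G T =
      (1 / SiLeM.volG G) *
        ∑ p ∈ Finset.univ.filter (fun p : V × V => G.Adj p.1 p.2),
          SiLeM.Itilde G T p.1 p.2 := by
  classical
  rw [SiLeM.CT]
  set L : T.node → ℝ := fun a =>
    Real.logb 2 (SiLeM.vol G (T.mark a) / SiLeM.vol G (T.mark (T.parent a))) with hL
  have hkey :
      ∑ p ∈ Finset.univ.filter (fun p : V × V => G.Adj p.1 p.2),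
          ∑ a ∈ Finset.univ.filter
            (fun a : T.node => a ≠ T.root ∧ p.1 ∈ T.mark a ∧ p.2 ∈ T.mark a),
            L a
        = ∑ a ∈ Finset.univ.filter (fun a : T.node => a ≠ T.root),
            ((Finset.univ.filter fun p : V × V =>
                G.Adj p.1 p.2 ∧ p.1 ∈ T.mark a ∧ p.2 ∈ T.mark a).card : ℝ) * L a := by
    calc
      ∑ p ∈ Finset.univ.filter (fun p : V × V => G.Adj p.1 p.2),
          ∑ a ∈ Finset.univ.filter
            (fun a : T.node => a ≠ T.root ∧ p.1 ∈ T.mark a ∧ p.2 ∈ T.mark a),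
            L a
        = ∑ p ∈ Finset.univ.filter (fun p : V × V => G.Adj p.1 p.2),
            ∑ a : T.node,
              if a ≠ T.root ∧ p.1 ∈ T.mark a ∧ p.2 ∈ T.mark a then L a else 0 :=
          Finset.sum_congr rfl fun p _ => Finset.sum_filter _ _
      _ = ∑ a : T.node, ∑ p ∈ Finset.univ.filter (fun p : V × V => G.Adj p.1 p.2),
              if a ≠ T.root ∧ p.1 ∈ T.mark a ∧ p.2 ∈ T.mark a then L a else 0 :=
          Finset.sum_comm
      _ = ∑ a : T.node,
            if a ≠ T.root then
              ((Finset.univ.filter fun p : V × V =>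
                  G.Adj p.1 p.2 ∧ p.1 ∈ T.mark a ∧ p.2 ∈ T.mark a).card : ℝ) * L a
            else 0 := by
          refine Finset.sum_congr rfl fun a _ => ?_
          by_cases ha : a = T.root
          · simp [ha]
          · simp only [ha, ne_eq, not_false_eq_true, true_and, if_true]
            rw [← Finset.sum_filter, Finset.sum_const, nsmul_eq_mul,
              Finset.filter_filter]
      _ = ∑ a ∈ Finset.univ.filter (fun a : T.node => a ≠ T.root),
            ((Finset.univ.filter fun p : V × V =>
                G.Adj p.1 p.2 ∧ p.1 ∈ T.mark a ∧ p.2 ∈ T.mark a).card : ℝ) * L a :=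
          (Finset.sum_filter _ _).symm
  have hIt : ∀ p : V × V, SiLeM.Itilde G T p.1 p.2
      = -∑ a ∈ Finset.univ.filter
            (fun a : T.node => a ≠ T.root ∧ p.1 ∈ T.mark a ∧ p.2 ∈ T.mark a),
            L a := fun p => rfl
  simp only [hIt]
  rw [Finset.sum_neg_distrib, hkey, mul_neg, neg_inj, Finset.mul_sum]
  refine Finset.sum_congr rfl fun a _ => ?_
  rw [vol_sub_ecut]
  ring
end

section
/- Let G=(V,E) be a connected graph and T an encoding tree of G. Define A = {α ∈ T : α ≠ λ, V_α > V_λ/2}. Then all nodes of A lie on a single root-to-leaf path of T (i.e., A is linearly ordered by the ancestor relation), and the quantity Δ = Σ_{α ∈ A} (1 − 2V_α/V_λ) log₂(V_α/V_{α⁻}) satisfies 0 ≤ Δ < 1. -/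
open Finset

open scoped Classical

namespace SiLeM

variable {V : Type} [Fintype V] [DecidableEq V]

lemma root_of_depth_zero (T : EncTree V) {a : T.node} (h : T.depth a = 0) :
    a = T.root := by
  by_contra hne
  have := T.depth_parent a hne
  omega

lemma vol_nonneg (G : SimpleGraph V) (s : Finset V) : 0 ≤ vol G s := by
  apply Finset.sum_nonneg; intro i _; positivity

lemma vol_mono (G : SimpleGraph V) {s t : Finset V} (h : s ⊆ t) :
    vol G s ≤ vol G t := by
  apply Finset.sum_le_sum_of_subset_of_nonneg h
  intro i _ _; positivity

lemma vol_le_volG (G : SimpleGraph V) (s : Finset V) : vol G s ≤ volG G :=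
  vol_mono G (Finset.subset_univ s)

lemma eq_of_same_depth (T : EncTree V) :
    ∀ n (a b : T.node) (x : V), T.depth a ≤ n → T.depth a = T.depth b →
      x ∈ T.mark a → x ∈ T.mark b → a = b := by
  intro n
  induction n with
  | zero =>
    intro a b x ha hd _ _
    rw [root_of_depth_zero T (Nat.le_zero.mp ha),
      root_of_depth_zero T (by omega : T.depth b = 0)]
  | succ n ih =>
    intro a b x ha hd hxa hxb
    by_cases hra : a = T.root
    · subst hra
      exact (root_of_depth_zero T (by rw [← hd, T.depth_root])).symm
    · have hrb : b ≠ T.root := by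
        intro h; subst h; rw [T.depth_root] at hd
        exact hra (root_of_depth_zero T hd)
      have hda := T.depth_parent a hra
      have hdb := T.depth_parent b hrb
      have hpp : T.parent a = T.parent b :=
        ih (T.parent a) (T.parent b) x (by omega) (by omega)
          (T.mark_subset a hra hxa) (T.mark_subset b hrb hxb)
      set c := T.parent a with hc
      have hac : a ≠ c := by
        intro h; rw [← h] at hda; omega
      have hbc : b ≠ c := by
        intro h
        rw [← hpp] at hdb
        rw [h] at hdb
        omega
      obtain ⟨u, _, hu⟩ := T.children_partition c ⟨a, hac, hc.symm⟩ x
        (T.mark_subset a hra hxa)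
      rw [hu a ⟨hac, hc.symm, hxa⟩, hu b ⟨hbc, hpp.symm, hxb⟩]

lemma mark_anti (T : EncTree V) :
    ∀ n (a b : T.node) (x : V), T.depth b ≤ n → T.depth a ≤ T.depth b →
      x ∈ T.mark a → x ∈ T.mark b → T.mark b ⊆ T.mark a := by
  intro n
  induction n with
  | zero =>
    intro a b x hb hab hxa hxb
    rw [eq_of_same_depth T 0 a b x (by omega) (by omega) hxa hxb]
  | succ n ih =>
    intro a b x hb hab hxa hxb
    rcases eq_or_lt_of_le hab with heq | hlt
    · rw [eq_of_same_depth T (n+1) a b x (by omega) heq hxa hxb]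
    · have hrb : b ≠ T.root := by
        intro h; subst h; rw [T.depth_root] at hlt; omega
      have hdb := T.depth_parent b hrb
      have hsub := T.mark_subset b hrb
      exact hsub.trans (ih a (T.parent b) x (by omega) (by omega) hxa (hsub hxb))

lemma comparable_of_inter (T : EncTree V) {a b : T.node} {x : V}
    (hxa : x ∈ T.mark a) (hxb : x ∈ T.mark b) :
    T.mark a ⊆ T.mark b ∨ T.mark b ⊆ T.mark a := by
  rcases le_total (T.depth a) (T.depth b) with h | h
  · exact Or.inr (mark_anti T (T.depth b) a b x le_rfl h hxa hxb)
  · exact Or.inl (mark_anti T (T.depth a) b a x le_rfl h hxb hxa)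

lemma inter_nonempty (G : SimpleGraph V) (T : EncTree V) {a b : T.node}
    (ha : volG G / 2 < vol G (T.mark a)) (hb : volG G / 2 < vol G (T.mark b)) :
    ∃ x, x ∈ T.mark a ∧ x ∈ T.mark b := by
  by_contra h
  push_neg at h
  have hdisj : Disjoint (T.mark a) (T.mark b) := by
    rw [Finset.disjoint_left]; exact fun x hx hx2 => h x hx hx2
  have h1 : vol G (T.mark a) + vol G (T.mark b) = vol G (T.mark a ∪ T.mark b) :=
    (Finset.sum_union hdisj).symm
  have h2 := vol_le_volG G (T.mark a ∪ T.mark b)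
  linarith

end SiLeM

/-- The nodes `α ≠ λ` with `V_α > V_λ/2` all lie on a single
root-to-leaf path (any two of them are comparable by inclusion of their markers),
and `Δ = Σ_{α ∈ A} (1 − 2V_α/V_λ) log₂(V_α/V_{α⁻})` satisfies `0 ≤ Δ < 1`. -/
theorem stmt17 {V : Type} [Fintype V] [DecidableEq V]
    (G : SimpleGraph V) (hconn : G.Connected) (T : EncTree V) :
    (∀ a b : T.node, a ≠ T.root → b ≠ T.root →
      SiLeM.volG G / 2 < SiLeM.vol G (T.mark a) →
      SiLeM.volG G / 2 < SiLeM.vol G (T.mark b) →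
      T.mark a ⊆ T.mark b ∨ T.mark b ⊆ T.mark a) ∧
    (0 ≤ ∑ a ∈ Finset.univ.filter
          (fun a : T.node =>
            a ≠ T.root ∧ SiLeM.volG G / 2 < SiLeM.vol G (T.mark a)),
          (1 - 2 * SiLeM.vol G (T.mark a) / SiLeM.volG G) *
            Real.logb 2
              (SiLeM.vol G (T.mark a) / SiLeM.vol G (T.mark (T.parent a))) ∧
      (∑ a ∈ Finset.univ.filter
          (fun a : T.node =>
            a ≠ T.root ∧ SiLeM.volG G / 2 < SiLeM.vol G (T.mark a)),
          (1 - 2 * SiLeM.vol G (T.mark a) / SiLeM.volG G) *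
            Real.logb 2
              (SiLeM.vol G (T.mark a) / SiLeM.vol G (T.mark (T.parent a)))) < 1) := by
  classical
  set A : Finset T.node := Finset.univ.filter
      (fun a : T.node =>
        a ≠ T.root ∧ SiLeM.volG G / 2 < SiLeM.vol G (T.mark a)) with hA
  have hmemA : ∀ a : T.node, a ∈ A ↔
      a ≠ T.root ∧ SiLeM.volG G / 2 < SiLeM.vol G (T.mark a) := by
    intro a
    simp only [hA, Finset.mem_filter, Finset.mem_univ, true_and]
  -- basic facts for elements of A
  have hfacts : ∀ a ∈ A, 0 < SiLeM.volG G ∧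
      0 < SiLeM.vol G (T.mark a) ∧
      SiLeM.vol G (T.mark a) ≤ SiLeM.vol G (T.mark (T.parent a)) ∧
      SiLeM.vol G (T.mark (T.parent a)) ≤ SiLeM.volG G := by
    intro a ha
    rw [hmemA] at ha
    obtain ⟨hra, hva⟩ := ha
    have h1 : SiLeM.vol G (T.mark a) ≤ SiLeM.vol G (T.mark (T.parent a)) :=
      SiLeM.vol_mono G (T.mark_subset a hra)
    have h2 := SiLeM.vol_le_volG G (T.mark (T.parent a))
    have h3 := SiLeM.vol_le_volG G (T.mark a)
    refine ⟨by linarith, by linarith, h1, h2⟩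
  refine ⟨?_, ?_, ?_⟩
  · intro a b _ _ hva hvb
    obtain ⟨x, hxa, hxb⟩ := SiLeM.inter_nonempty G T hva hvb
    exact SiLeM.comparable_of_inter T hxa hxb
  · apply Finset.sum_nonneg
    intro a ha
    obtain ⟨hvG, hv, hvp, hpG⟩ := hfacts a ha
    rw [hmemA] at ha
    have hc : 1 - 2 * SiLeM.vol G (T.mark a) / SiLeM.volG G ≤ 0 := by
      rw [sub_nonpos, le_div_iff₀ hvG]; linarith [ha.2]
    have hL : Real.logb 2 (SiLeM.vol G (T.mark a) /
        SiLeM.vol G (T.mark (T.parent a))) ≤ 0 := by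
      apply Real.logb_nonpos one_lt_two
      · exact div_nonneg (le_of_lt hv) (by linarith)
      · rw [div_le_one (by linarith)]; exact hvp
    nlinarith [mul_nonneg (neg_nonneg.mpr hc) (neg_nonneg.mpr hL)]
  · rcases A.eq_empty_or_nonempty with hAe | hAne
    · rw [hAe, Finset.sum_empty]; norm_num
    · obtain ⟨a₁, ha₁⟩ := hAne
      have hvG : 0 < SiLeM.volG G := (hfacts a₁ ha₁).1
      -- parent is injective on A
      have hinj : ∀ a ∈ A, ∀ b ∈ A, T.parent a = T.parent b → a = b := by
        intro a ha b hb hpab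
        rw [hmemA] at ha hb
        obtain ⟨x, hxa, hxb⟩ := SiLeM.inter_nonempty G T ha.2 hb.2
        have hda := T.depth_parent a ha.1
        have hdb := T.depth_parent b hb.1
        exact SiLeM.eq_of_same_depth T (T.depth a) a b x le_rfl
          (by rw [hda, hdb, hpab]) hxa hxb
      set P : Finset T.node := A.image T.parent with hP
      have hcardP : P.card = A.card := Finset.card_image_of_injOn hinj
      -- P \ A = {root}
      have hPA : P \ A = {T.root} := by
        apply Finset.Subset.antisymm
        · intro c hc
          rw [Finset.mem_sdiff, hP, Finset.mem_image] at hc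
          obtain ⟨⟨a, ha, hpa⟩, hcA⟩ := hc
          rw [Finset.mem_singleton]
          by_contra hcr
          apply hcA
          rw [hmemA]
          refine ⟨hcr, ?_⟩
          rw [hmemA] at ha
          have := SiLeM.vol_mono G (T.mark_subset a ha.1)
          rw [hpa] at this
          linarith [ha.2]
        · intro c hc
          rw [Finset.mem_singleton] at hc
          subst hc
          obtain ⟨a₀, ha₀, hmin⟩ := A.exists_min_image T.depth ⟨a₁, ha₁⟩
          have hpr : T.parent a₀ = T.root := by
            by_contra hpr
            have hpA : T.parent a₀ ∈ A := by
              rw [hmemA]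
              refine ⟨hpr, ?_⟩
              have h1 := SiLeM.vol_mono G
                (T.mark_subset a₀ ((hmemA a₀).mp ha₀).1)
              linarith [((hmemA a₀).mp ha₀).2]
            have := hmin _ hpA
            have hda := T.depth_parent a₀ ((hmemA a₀).mp ha₀).1
            omega
          rw [Finset.mem_sdiff]
          constructor
          · rw [hP, Finset.mem_image]; exact ⟨a₀, ha₀, hpr⟩
          · rw [hmemA]; tauto
      -- A \ P is a singleton {m}
      have hc1 : (P \ A).card = 1 := by rw [hPA]; simp
      have hc2 : (A \ P).card = 1 := by
        have e1 := Finset.card_sdiff_add_card_inter A P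
        have e2 := Finset.card_sdiff_add_card_inter P A
        rw [Finset.inter_comm P A] at e2
        omega
      obtain ⟨m, hm⟩ := Finset.card_eq_one.mp hc2
      have hmA : m ∈ A := by
        have : m ∈ A \ P := by rw [hm]; exact Finset.mem_singleton_self m
        exact (Finset.mem_sdiff.mp this).1
      -- pointwise bound and telescoping
      set g : T.node → ℝ := fun c => Real.logb 2 (SiLeM.vol G (T.mark c)) with hg
      have hstep : ∀ a ∈ A,
          (1 - 2 * SiLeM.vol G (T.mark a) / SiLeM.volG G) *
            Real.logb 2 (SiLeM.vol G (T.mark a) /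
              SiLeM.vol G (T.mark (T.parent a))) ≤ g (T.parent a) - g a := by
        intro a ha
        obtain ⟨_, hv, hvp, hpG⟩ := hfacts a ha
        have hvp0 : 0 < SiLeM.vol G (T.mark (T.parent a)) := lt_of_lt_of_le hv hvp
        rw [Real.logb_div (ne_of_gt hv) (ne_of_gt hvp0), hg]
        have hc : 0 ≤ (1 - 2 * SiLeM.vol G (T.mark a) / SiLeM.volG G) + 1 := by
          have : 2 * SiLeM.vol G (T.mark a) / SiLeM.volG G ≤ 2 := by
            rw [div_le_iff₀ hvG]; linarith [SiLeM.vol_le_volG G (T.mark a)]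
          linarith
        have hL : Real.logb 2 (SiLeM.vol G (T.mark a)) -
            Real.logb 2 (SiLeM.vol G (T.mark (T.parent a))) ≤ 0 := by
          have := Real.logb_le_logb_of_le one_lt_two hv hvp
          linarith
        nlinarith [mul_nonpos_of_nonneg_of_nonpos hc hL]
      calc ∑ a ∈ A, (1 - 2 * SiLeM.vol G (T.mark a) / SiLeM.volG G) *
            Real.logb 2 (SiLeM.vol G (T.mark a) /
              SiLeM.vol G (T.mark (T.parent a)))
          ≤ ∑ a ∈ A, (g (T.parent a) - g a) := Finset.sum_le_sum hstep
        _ = ∑ c ∈ P, g c - ∑ a ∈ A, g a := by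
            rw [Finset.sum_sub_distrib, hP, Finset.sum_image hinj]
        _ = ∑ c ∈ P \ A, g c - ∑ a ∈ A \ P, g a := by
            have e1 := Finset.sum_inter_add_sum_sdiff P A g
            have e2 := Finset.sum_inter_add_sum_sdiff A P g
            rw [Finset.inter_comm A P] at e2
            linarith
        _ = g T.root - g m := by rw [hPA, hm, Finset.sum_singleton,
            Finset.sum_singleton]
        _ < 1 := by
            show Real.logb 2 (SiLeM.vol G (T.mark T.root)) -
              Real.logb 2 (SiLeM.vol G (T.mark m)) < 1
            have hroot : SiLeM.vol G (T.mark T.root) = SiLeM.volG G := by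
              rw [T.mark_root]; rfl
            rw [hroot]
            have hmv := ((hmemA m).mp hmA).2
            have h1 : Real.logb 2 (SiLeM.volG G / 2) <
                Real.logb 2 (SiLeM.vol G (T.mark m)) :=
              Real.logb_lt_logb one_lt_two (by positivity) hmv
            rw [Real.logb_div (by positivity) two_ne_zero] at h1
            have h2 : Real.logb 2 2 = 1 := Real.logb_self_eq_one one_lt_two
            linarith
end
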